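/- arXiv:1812.06050 — 2 statements merged into one kernel-verified Lean document; each statement's English description precedes it below -/
import Mathlib

section
/- Perfect security of the quantum one-time pad: for every complex matrix M indexed by I = (Fin n → ZMod 2) with Trace M = 1, (1/4^n) • ∑_{a,b : I} (X^a * Z^b) * M * (X^a * Z^b)ᴴ = (1/2^n) • 1, i.e., averaging the QOTP encryption over all 2^{2n} keys maps every density matrix to the totally mixed state I/2^n. -/
open Matrix BigOperators

/-- The inner product `a ⊙ b = ∑ i, a i * b i` in `ZMod 2`. -/
def bdot {n : ℕ} (a b : Fin n → ZMod 2) : ZMod 2 := ∑ i, a i * b i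

/-- `χ(a,b) = (-1)^(a ⊙ b)` as a complex number. -/
noncomputable def chi {n : ℕ} (a b : Fin n → ZMod 2) : ℂ :=
  if bdot a b = 1 then -1 else 1

/-- The `n`-qubit Pauli string `X^a`: `|v⟩ ↦ |v ⊕ a⟩`. -/
noncomputable def PX {n : ℕ} (a : Fin n → ZMod 2) :
    Matrix (Fin n → ZMod 2) (Fin n → ZMod 2) ℂ :=
  fun u v => if u = v + a then 1 else 0

/-- The `n`-qubit Pauli string `Z^b`: `|v⟩ ↦ (-1)^(b ⊙ v) |v⟩`. -/
noncomputable def PZ {n : ℕ} (b : Fin n → ZMod 2) :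
    Matrix (Fin n → ZMod 2) (Fin n → ZMod 2) ℂ :=
  fun u v => if u = v then chi b v else 0

/-!
Conjugation by `X^a Z^b` sends the entry `M u v` to `χ(b, u - a) χ(b, v - a) M (u - a) (v - a)`.
Summing over `b`, orthogonality of the characters `b ↦ χ(b, ·)` kills every off-diagonal entry
and multiplies the diagonal ones by `2^n`; summing over `a` then spreads each diagonal entry
over the whole trace, so the twirl of `M` is `2^n (tr M) • 1`.
-/

lemma ZMod.eq_zero_or_eq_one (x : ZMod 2) : x = 0 ∨ x = 1 := by
  revert x; decide

def signChar : AddChar (ZMod 2) ℂ where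
  toFun x := if x = 1 then -1 else 1
  map_zero_eq_one' := by simp
  map_add_eq_mul' x y := by
    obtain rfl | rfl := ZMod.eq_zero_or_eq_one x <;>
      obtain rfl | rfl := ZMod.eq_zero_or_eq_one y <;> simp [show (1 : ZMod 2) + 1 = 0 from rfl]

lemma signChar_eq_one_iff (x : ZMod 2) : signChar x = 1 ↔ x = 0 := by
  obtain rfl | rfl := ZMod.eq_zero_or_eq_one x <;> norm_num [signChar]

section
variable {n : ℕ}

lemma chi_eq_signChar (b c : Fin n → ZMod 2) : chi b c = signChar (c ⬝ᵥ b) := by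
  rw [dotProduct_comm]; rfl

def dotChar (c : Fin n → ZMod 2) : AddChar (Fin n → ZMod 2) ℂ :=
  signChar.compAddMonoidHom (AddMonoidHom.mk' (c ⬝ᵥ ·) fun x y => dotProduct_add c x y)

lemma dotChar_apply (b c : Fin n → ZMod 2) : dotChar c b = chi b c :=
  (chi_eq_signChar b c).symm

lemma dotChar_eq_zero_iff (c : Fin n → ZMod 2) : dotChar c = 0 ↔ c = 0 := by
  simp only [AddChar.eq_zero_iff, dotChar, AddChar.compAddMonoidHom_apply,
    AddMonoidHom.mk'_apply, signChar_eq_one_iff, dotProduct_eq_zero_iff]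

lemma chi_add_right (b x y : Fin n → ZMod 2) : chi b (x + y) = chi b x * chi b y := by
  simp only [chi_eq_signChar, add_dotProduct, AddChar.map_add_eq_mul]

lemma sum_chi (c : Fin n → ZMod 2) :
    ∑ b, chi b c = if c = 0 then (2 : ℂ) ^ n else 0 := by
  simp only [← dotChar_apply, AddChar.sum_eq_ite, dotChar_eq_zero_iff]
  simp [ZMod.card]

lemma sum_chi_mul_chi (x y : Fin n → ZMod 2) :
    ∑ b, chi b x * chi b y = if x = y then (2 : ℂ) ^ n else 0 := by
  have hneg : -y = y := funext fun i => ZMod.neg_eq_self_mod_two (y i)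
  simp only [← chi_add_right, sum_chi, add_eq_zero_iff_eq_neg, hneg]

lemma star_chi (b x : Fin n → ZMod 2) : star (chi b x) = chi b x := by
  unfold chi; split_ifs <;> simp

lemma PX_mul_apply {m : Type*} (a : Fin n → ZMod 2) (N : Matrix (Fin n → ZMod 2) m ℂ)
    (u : Fin n → ZMod 2) (v : m) :
    (PX a * N) u v = N (u - a) v := by
  simp [mul_apply, PX, ← sub_eq_iff_eq_add]

lemma mul_conjTranspose_PX_apply {m : Type*} (a : Fin n → ZMod 2)
    (N : Matrix m (Fin n → ZMod 2) ℂ) (u : m) (v : Fin n → ZMod 2) :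
    (N * (PX a)ᴴ) u v = N u (v - a) := by
  simp [mul_apply, PX, conjTranspose_apply, ← sub_eq_iff_eq_add]

lemma PZ_eq_diagonal (b : Fin n → ZMod 2) : PZ b = diagonal (chi b) := by
  ext u v; simp only [PZ, diagonal_apply]; split_ifs with h <;> simp [h]

lemma PZ_conj_apply (b : Fin n → ZMod 2) (M : Matrix (Fin n → ZMod 2) (Fin n → ZMod 2) ℂ)
    (u v : Fin n → ZMod 2) :
    (PZ b * M * (PZ b)ᴴ) u v = chi b u * chi b v * M u v := by
  rw [PZ_eq_diagonal, diagonal_conjTranspose, mul_diagonal, diagonal_mul, Pi.star_apply,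
    star_chi]
  ring

lemma pauli_conj_apply (a b : Fin n → ZMod 2)
    (M : Matrix (Fin n → ZMod 2) (Fin n → ZMod 2) ℂ) (u v : Fin n → ZMod 2) :
    ((PX a * PZ b) * M * (PX a * PZ b)ᴴ) u v
      = chi b (u - a) * chi b (v - a) * M (u - a) (v - a) := by
  rw [conjTranspose_mul, ← Matrix.mul_assoc, Matrix.mul_assoc (PX a), Matrix.mul_assoc (PX a),
    mul_conjTranspose_PX_apply, PX_mul_apply, PZ_conj_apply]

lemma sum_pauli_conj (M : Matrix (Fin n → ZMod 2) (Fin n → ZMod 2) ℂ) :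
    ∑ a, ∑ b, (PX a * PZ b) * M * (PX a * PZ b)ᴴ = ((2 : ℂ) ^ n * M.trace) • 1 := by
  ext u v
  simp only [Matrix.sum_apply, pauli_conj_apply, ← Finset.sum_mul, sum_chi_mul_chi, sub_left_inj,
    Matrix.smul_apply, one_apply]
  by_cases huv : u = v
  · subst huv
    simp only [if_true, ← Finset.mul_sum, smul_eq_mul, mul_one]
    congr 1
    exact (Equiv.subLeft u).sum_comp fun w => M w w
  · simp [huv]

end

theorem qotp_perfect_security (n : ℕ)
    (M : Matrix (Fin n → ZMod 2) (Fin n → ZMod 2) ℂ) (hM : M.trace = 1) :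
    ((4 : ℂ) ^ n)⁻¹ • ∑ a : Fin n → ZMod 2, ∑ b : Fin n → ZMod 2,
        (PX a * PZ b) * M * (PX a * PZ b)ᴴ =
      ((2 : ℂ) ^ n)⁻¹ • (1 : Matrix (Fin n → ZMod 2) (Fin n → ZMod 2) ℂ) := by
  have four_pow : (4 : ℂ) ^ n = 2 ^ n * 2 ^ n := by rw [← mul_pow]; norm_num
  rw [sum_pauli_conj, hM, smul_smul, four_pow]
  congr 1
  field_simp
end

section
/- Core of Proposition 1 (the scheme [[p_c = 1/2^n, X^c Z^c]] is not IND-secure), part 2: let E₀ = e₀ e₀ᴴ be the rank-one projector onto the standard basis vector at the all-zero string (the state |0⟩^{⊗n}). Then (1/2^n) • ∑_{c : Fin n → ZMod 2} (X^c * Z^c) * E₀ * (X^c * Z^c)ᴴ = (1/2^n) • 1; i.e., the ciphertext of |0^n⟩⟨0^n| averaged over all keys c is the totally mixed state. Combined with part 1, an adversary measuring in the basis containing Ψ distinguishes the two averaged ciphertexts with probability 1 versus 1/2^n. -/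
open Matrix BigOperators

/-- The projector `|0^n⟩⟨0^n|` onto the all-zero basis state. -/
noncomputable def E₀ (n : ℕ) :
    Matrix (Fin n → ZMod 2) (Fin n → ZMod 2) ℂ :=
  fun u v => (if u = 0 then 1 else 0) * (starRingEnd ℂ) (if v = 0 then 1 else 0)

/-! The key `c` sends `|0⟩` to `X^c Z^c |0⟩ = χ(c,0) |c⟩ = |c⟩`, so the encrypted state is the
basis projector `|c⟩⟨c|`; summing these over all keys gives the identity. -/

theorem Matrix.mul_vecMulVec_star_mul_conjTranspose {α m n : Type*} [Fintype n] [CommSemiring α]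
    [StarRing α] (M : Matrix m n α) (x : n → α) :
    M * vecMulVec x (star x) * Mᴴ = vecMulVec (M *ᵥ x) (star (M *ᵥ x)) := by
  rw [mul_vecMulVec, vecMulVec_mul, star_mulVec]

theorem Matrix.vecMulVec_single_one_star {α m : Type*} [DecidableEq m] [Semiring α] [StarRing α]
    (i : m) : vecMulVec (Pi.single i (1 : α)) (star (Pi.single i 1)) = single i i 1 := by
  rw [Pi.star_single, star_one, single_eq_single_vecMulVec_single]

theorem E₀_eq_vecMulVec (n : ℕ) :
    E₀ n = vecMulVec (Pi.single 0 1) (star (Pi.single 0 1)) := by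
  ext u v
  simp [E₀, vecMulVec_apply, Pi.single_apply]

section Pauli

variable {n : ℕ}

theorem chi_zero_right (a : Fin n → ZMod 2) : chi a 0 = 1 := by
  simp [chi, bdot]

theorem PX_mulVec_single (a v : Fin n → ZMod 2) (z : ℂ) :
    PX a *ᵥ Pi.single v z = Pi.single (v + a) z := by
  ext u
  simp [PX, mulVec_single, Pi.single_apply]

theorem PZ_mulVec_single (b v : Fin n → ZMod 2) (z : ℂ) :
    PZ b *ᵥ Pi.single v z = Pi.single v (chi b v * z) := by
  ext u
  by_cases h : u = v <;> simp [PZ, mulVec_single, h, mul_comm]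

theorem PX_mul_PZ_mulVec_single_zero (c : Fin n → ZMod 2) :
    (PX c * PZ c) *ᵥ Pi.single 0 1 = Pi.single c 1 := by
  rw [← mulVec_mulVec, PZ_mulVec_single, PX_mulVec_single, chi_zero_right, mul_one, zero_add]

end Pauli

theorem xz_scheme_randomizes_zero_state (n : ℕ) :
    ((2 : ℂ) ^ n)⁻¹ • ∑ c : Fin n → ZMod 2,
        (PX c * PZ c) * E₀ n * (PX c * PZ c)ᴴ =
      ((2 : ℂ) ^ n)⁻¹ • (1 : Matrix (Fin n → ZMod 2) (Fin n → ZMod 2) ℂ) := by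
  congr 1
  simp_rw [E₀_eq_vecMulVec, mul_vecMulVec_star_mul_conjTranspose, PX_mul_PZ_mulVec_single_zero,
    vecMulVec_single_one_star]
  exact sum_single_one
end
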